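/- For every positive integer r, the sequence n ↦ z_n({2}^r; e^{2πi/n}) converges as n → ∞ to 2^{2r} π^{2r} / ((r+1) · (2r+1)!). That is, ξ({2}^r) = 2^{2r} π^{2r} / ((r+1)(2r+1)!). -/

import Mathlib

open Finset

/-- The set of tuples `(m_1,...,m_r)` with `n > m_1 > m_2 > ... > m_r > 0`. -/
def msets (n r : ℕ) : Finset (Fin r → Fin n) :=
  Finset.univ.filter fun m =>
    (∀ i j : Fin r, i < j → m j < m i) ∧ ∀ i, 0 < (m i : ℕ)

/-- The set of tuples `(m_1,...,m_r)` with `n > m_1 ≥ m_2 ≥ ... ≥ m_r > 0`. -/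
def msetsStar (n r : ℕ) : Finset (Fin r → Fin n) :=
  Finset.univ.filter fun m =>
    (∀ i j : Fin r, i ≤ j → m j ≤ m i) ∧ ∀ i, 0 < (m i : ℕ)

/-- The finite multiple harmonic q-series
`z_n(k_1,…,k_r; q) = Σ_{n > m_1 > … > m_r > 0} Π_i q^{(k_i-1)m_i}/[m_i]_q^{k_i}`,
where `[m]_q = (1-q^m)/(1-q)`. -/
noncomputable def z (n : ℕ) {r : ℕ} (k : Fin r → ℕ) (q : ℂ) : ℂ :=
  ∑ m ∈ msets n r,
    ∏ i, q ^ ((k i - 1) * (m i : ℕ)) / ((1 - q ^ (m i : ℕ)) / (1 - q)) ^ (k i)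

/-- The star version `z*_n(k; q)`, summed over `n > m_1 ≥ … ≥ m_r > 0`. -/
noncomputable def zstar (n : ℕ) {r : ℕ} (k : Fin r → ℕ) (q : ℂ) : ℂ :=
  ∑ m ∈ msetsStar n r,
    ∏ i, q ^ ((k i - 1) * (m i : ℕ)) / ((1 - q ^ (m i : ℕ)) / (1 - q)) ^ (k i)

/-- The modified value `z̄_n(k;q) = (1-q)^{-wt(k)} z_n(k;q)`. -/
noncomputable def zbar (n : ℕ) {r : ℕ} (k : Fin r → ℕ) (q : ℂ) : ℂ :=
  (1 - q)⁻¹ ^ (∑ i, k i) * z n k q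

/-- The modified star value `z̄*_n(k;q) = (1-q)^{-wt(k)} z*_n(k;q)`. -/
noncomputable def zstarbar (n : ℕ) {r : ℕ} (k : Fin r → ℕ) (q : ℂ) : ℂ :=
  (1 - q)⁻¹ ^ (∑ i, k i) * zstar n k q

/-- `I(k,r,s)`: the set of indices (tuples of positive integers) of weight `k`,
depth `r` and height `s`. -/
def indexSet3 (k r s : ℕ) : Finset (Fin r → ℕ) :=
  (Finset.Nat.antidiagonalTuple r k).filter fun a =>
    (∀ i, 1 ≤ a i) ∧ (Finset.univ.filter fun i => 2 ≤ a i).card = s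

/-- `I(k,r)`: the set of indices of weight `k` and depth `r`. -/
def indexSet2 (k r : ℕ) : Finset (Fin r → ℕ) :=
  (Finset.Nat.antidiagonalTuple r k).filter fun a => ∀ i, 1 ≤ a i

/-- The one-variable finite q-multiple polylogarithm
`L_{k_1,…,k_r}^{(n)}(t;q) = Σ_{n > m_1 > … > m_r > 0} t^{m_1} / Π_i (1-q^{m_i})^{k_i}`,
with `L_∅(t) = 1`. -/
noncomputable def Lpoly (n : ℕ) {r : ℕ} (k : Fin r → ℕ) (q t : ℂ) : ℂ :=
  ∑ m ∈ msets n r,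
    ∏ i : Fin r, (if i.val = 0 then t ^ (m i : ℕ) else 1) / (1 - q ^ (m i : ℕ)) ^ (k i)

/-- The star version `L*_{k_1,…,k_r}^{(n)}(t;q)`, summed over `n > m_1 ≥ … ≥ m_r > 0`. -/
noncomputable def LpolyStar (n : ℕ) {r : ℕ} (k : Fin r → ℕ) (q t : ℂ) : ℂ :=
  ∑ m ∈ msetsStar n r,
    ∏ i : Fin r, (if i.val = 0 then t ^ (m i : ℕ) else 1) / (1 - q ^ (m i : ℕ)) ^ (k i)
/-!
Put `w_m = ζ^m / (1 - ζ^m)^2` for a primitive `n`-th root of unity `ζ`. Then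
`z_n({2}^r; ζ) = (1 - ζ)^{2r} e_r(w_1, …, w_{n-1})`, and
`∏_{m=1}^{n-1} ((1 - ζ^m)^2 + ζ^m t) = n^2 ∏_{m=1}^{n-1} (1 + w_m t)` is the polynomial `F_n`
determined by `t F_n(t) = 2 - α^n - α^{-n}` for `t = 2 - α - α^{-1}`: after multiplying by
`t = (1 - α)(1 - α^{-1})` both sides factor as `(1 - α^n)(1 - α^{-n})`. The coefficients of
`F_n` are explicit binomial coefficients, which gives
`n^2 e_r(w) = (-1)^r (C(n+r+1, 2r+2) + C(n+r, 2r+2)) ~ (-1)^r 2 n^{2r+2} / (2r+2)!`,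
while `n (1 - e^{2πi/n}) → -2πi`.
-/

open Finset Polynomial Filter Topology

theorem Nat.choose_add_two_add_choose (k m : ℕ) :
    (k + 2).choose (m + 2) + k.choose (m + 2) = 2 * (k + 1).choose (m + 2) + k.choose m := by
  have h₁ : (k + 2).choose (m + 2) = (k + 1).choose (m + 1) + (k + 1).choose (m + 2) :=
    choose_succ_succ' _ _
  have h₂ : (k + 1).choose (m + 1) = k.choose m + k.choose (m + 1) := choose_succ_succ' _ _
  have h₃ : (k + 1).choose (m + 2) = k.choose (m + 1) + k.choose (m + 2) := choose_succ_succ' _ _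
  omega

section Fejer

def fejerCoeff (n j : ℕ) : ℕ := (n + j + 1).choose (2 * j + 2) + (n + j).choose (2 * j + 2)

lemma fejerCoeff_of_le {n j : ℕ} (h : n ≤ j) : fejerCoeff n j = 0 := by
  simp [fejerCoeff, Nat.choose_eq_zero_of_lt, show n + j + 1 < 2 * j + 2 by omega,
    show n + j < 2 * j + 2 by omega]

lemma fejerCoeff_add_two_zero (n : ℕ) :
    fejerCoeff (n + 2) 0 + fejerCoeff n 0 = 2 * fejerCoeff (n + 1) 0 + 2 := by
  have h₁ := Nat.choose_add_two_add_choose (n + 1) 0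
  have h₂ := Nat.choose_add_two_add_choose n 0
  simp only [fejerCoeff, Nat.choose_zero_right] at *
  ring_nf at *
  omega

lemma fejerCoeff_add_two_succ (n j : ℕ) :
    fejerCoeff (n + 2) (j + 1) + fejerCoeff n (j + 1) =
      2 * fejerCoeff (n + 1) (j + 1) + fejerCoeff (n + 1) j := by
  have h₁ := Nat.choose_add_two_add_choose (n + j + 2) (2 * j + 2)
  have h₂ := Nat.choose_add_two_add_choose (n + j + 1) (2 * j + 2)
  simp only [fejerCoeff] at *
  ring_nf at *
  omega

variable (R : Type*) [CommRing R]

/-- The polynomial `F_n` with `t F_n(t) = 2 - α^n - α⁻¹^n` for `t = 2 - α - α⁻¹`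
(`mul_eval_fejerPoly`); at `α = e^{iθ}` it is `sin²(nθ/2) / sin²(θ/2)`, i.e. `n` times the
Fejér kernel. -/
noncomputable def fejerPoly (n : ℕ) : R[X] :=
  ∑ j ∈ range n, C ((-1) ^ j * (fejerCoeff n j : R)) * X ^ j

variable {R}

lemma coeff_fejerPoly (n j : ℕ) : (fejerPoly R n).coeff j = (-1) ^ j * (fejerCoeff n j : R) := by
  simp only [fejerPoly, finsetSum_coeff, coeff_C_mul_X_pow, sum_ite_eq, mem_range]
  split_ifs with h
  · rfl
  · simp [fejerCoeff_of_le (not_lt.1 h)]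

lemma fejerPoly_add_two (n : ℕ) :
    fejerPoly R (n + 2) = (2 - X) * fejerPoly R (n + 1) - fejerPoly R n + 2 := by
  ext (_ | j)
  · have := congrArg (Nat.cast : ℕ → R) (fejerCoeff_add_two_zero n)
    push_cast at this
    simp only [coeff_fejerPoly, sub_mul, coeff_add, coeff_sub, coeff_ofNat_mul, mul_coeff_zero,
      coeff_X_zero, coeff_ofNat_zero, pow_zero, one_mul, zero_mul, sub_zero]
    linear_combination this
  · have := congrArg (Nat.cast : ℕ → R) (fejerCoeff_add_two_succ n j)
    push_cast at this
    simp only [coeff_fejerPoly, sub_mul, coeff_add, coeff_sub, coeff_ofNat_mul, coeff_X_mul,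
      coeff_ofNat_succ, add_zero]
    linear_combination (-(-1) ^ j) * this

theorem mul_eval_fejerPoly {α β : R} (h : α * β = 1) :
    ∀ n : ℕ, (2 - α - β) * (fejerPoly R n).eval (2 - α - β) = 2 - α ^ n - β ^ n
  | 0 => by norm_num [fejerPoly]
  | 1 => by simp [fejerPoly, fejerCoeff]
  | n + 2 => by
    rw [fejerPoly_add_two]
    simp only [eval_add, eval_sub, eval_mul, eval_X, eval_ofNat]
    linear_combination (α + β) * mul_eval_fejerPoly h (n + 1) - mul_eval_fejerPoly h n -
      (α ^ n + β ^ n) * h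

end Fejer

theorem Polynomial.coeff_prod_one_add_C_mul_X {R ι : Type*} [CommSemiring R] (s : Finset ι)
    (w : ι → R) (k : ℕ) :
    (∏ i ∈ s, (1 + C (w i) * X)).coeff k = ∑ t ∈ s.powersetCard k, ∏ i ∈ t, w i := by
  classical
  simp only [prod_one_add, prod_mul_distrib, prod_const, ← map_prod, finsetSum_coeff,
    coeff_C_mul_X_pow, powersetCard_eq_filter, sum_filter]
  exact sum_congr rfl fun t _ => by split_ifs <;> simp_all [eq_comm]

section RootsOfUnity

variable {R : Type*} [CommRing R] [IsDomain R] {ζ : R} {n : ℕ}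

theorem IsPrimitiveRoot.prod_one_sub_pow_mul (hζ : IsPrimitiveRoot ζ n) (hn : 0 < n) (y : R) :
    ∏ i ∈ range n, (1 - ζ ^ i * y) = 1 - y ^ n := by
  simpa [eval_prod] using congrArg (eval 1) (X_pow_sub_C_eq_prod hζ hn rfl).symm

theorem IsPrimitiveRoot.prod_Ico_one_sub_pow (hζ : IsPrimitiveRoot ζ n) (hn : 0 < n) :
    ∏ m ∈ Ico 1 n, (1 - ζ ^ m) = n := by
  obtain ⟨n, rfl⟩ := Nat.exists_eq_add_of_lt hn
  rw [prod_Ico_eq_prod_range]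
  simpa [add_comm] using hζ.prod_one_sub_pow_eq_order

end RootsOfUnity

section AlgClosed

variable {K : Type*} [Field K] [IsAlgClosed K] {ζ : K} {n : ℕ}

theorem IsPrimitiveRoot.mul_prod_Ico_eq_mul_eval_fejerPoly (hζ : IsPrimitiveRoot ζ n) (hn : 0 < n)
    (t : K) :
    t * ∏ m ∈ Ico 1 n, ((1 - ζ ^ m) ^ 2 + ζ ^ m * t) = t * (fejerPoly K n).eval t := by
  obtain ⟨α, hα⟩ := IsAlgClosed.exists_root (X ^ 2 - C (2 - t) * X + 1 : K[X])
    (by rw [show (X ^ 2 - C (2 - t) * X + 1 : K[X]).degree = 2 by compute_degree!]; decide)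
  obtain ⟨β, rfl⟩ : ∃ β, t = 2 - α - β := ⟨2 - t - α, by ring⟩
  have hαβ : α * β = 1 := by
    simp only [IsRoot, eval_add, eval_sub, eval_mul, eval_pow, eval_X, eval_C, eval_one] at hα
    linear_combination -hα
  have hfactor (m : ℕ) :
      (1 - ζ ^ m) ^ 2 + ζ ^ m * (2 - α - β) = (1 - ζ ^ m * α) * (1 - ζ ^ m * β) := by
    linear_combination -(ζ ^ m) ^ 2 * hαβ
  have hsplit (y : K) : (1 - y) * ∏ m ∈ Ico 1 n, (1 - ζ ^ m * y) = 1 - y ^ n := by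
    rw [← hζ.prod_one_sub_pow_mul hn, range_eq_Ico, prod_eq_prod_Ico_succ_bot hn]
    simp
  set A := ∏ m ∈ Ico 1 n, (1 - ζ ^ m * α)
  set B := ∏ m ∈ Ico 1 n, (1 - ζ ^ m * β)
  calc (2 - α - β) * ∏ m ∈ Ico 1 n, ((1 - ζ ^ m) ^ 2 + ζ ^ m * (2 - α - β))
      = ((1 - α) * A) * ((1 - β) * B) := by
        rw [prod_congr rfl fun m _ => hfactor m, prod_mul_distrib]
        linear_combination -A * B * hαβ
    _ = 2 - α ^ n - β ^ n := by
        rw [hsplit, hsplit]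
        linear_combination congrArg (· ^ n) hαβ
    _ = _ := (mul_eval_fejerPoly hαβ n).symm

theorem IsPrimitiveRoot.prod_Ico_eq_fejerPoly (hζ : IsPrimitiveRoot ζ n) (hn : 0 < n) :
    ∏ m ∈ Ico 1 n, (C ((1 - ζ ^ m) ^ 2) + C (ζ ^ m) * X) = fejerPoly K n := by
  refine mul_left_cancel₀ X_ne_zero (Polynomial.funext fun t => ?_)
  simpa [eval_prod] using hζ.mul_prod_Ico_eq_mul_eval_fejerPoly hn t

theorem IsPrimitiveRoot.fejerCoeff_eq_sum_powersetCard (hζ : IsPrimitiveRoot ζ n) (hn : 0 < n)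
    (r : ℕ) :
    (n : K) ^ 2 * ∑ S ∈ (Ico 1 n).powersetCard r, ∏ m ∈ S, ζ ^ m / (1 - ζ ^ m) ^ 2 =
      (-1) ^ r * fejerCoeff n r := by
  have hfactor : ∀ m ∈ Ico 1 n, C ((1 - ζ ^ m) ^ 2) + C (ζ ^ m) * X =
      C ((1 - ζ ^ m) ^ 2) * (1 + C (ζ ^ m / (1 - ζ ^ m) ^ 2) * X) := by
    intro m hm
    obtain ⟨hm₀, hmn⟩ := mem_Ico.1 hm
    have : (1 - ζ ^ m) ^ 2 ≠ 0 :=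
      pow_ne_zero 2 (sub_ne_zero.2 (hζ.pow_ne_one_of_pos_of_lt (by omega) hmn).symm)
    rw [mul_add, mul_one, ← mul_assoc, ← C_mul, mul_div_cancel₀ _ this]
  have := congrArg (coeff · r) (hζ.prod_Ico_eq_fejerPoly hn)
  simpa only [prod_congr rfl hfactor, prod_mul_distrib, ← map_prod, coeff_C_mul,
    coeff_prod_one_add_C_mul_X, coeff_fejerPoly, prod_pow, hζ.prod_Ico_one_sub_pow hn] using this

end AlgClosed

section Msets

variable {n r : ℕ}

lemma mem_msets {m : Fin r → Fin n} :
    m ∈ msets n r ↔ StrictAnti m ∧ ∀ i, 0 < (m i : ℕ) := by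
  simp [msets, StrictAnti]

lemma val_injective_of_mem_msets {m : Fin r → Fin n} (hm : m ∈ msets n r) :
    Function.Injective fun i => (m i : ℕ) :=
  Fin.val_injective.comp (mem_msets.1 hm).1.injective

theorem sum_msets_prod {R : Type*} [CommSemiring R] (f : ℕ → R) :
    ∑ m ∈ msets n r, ∏ i, f (m i) = ∑ S ∈ (Ico 1 n).powersetCard r, ∏ a ∈ S, f a := by
  refine sum_bij' (fun m _ => univ.image fun i => (m i : ℕ))
    (fun S hS i => ⟨S.orderEmbOfFin (mem_powersetCard.1 hS).2 i.rev,
      (mem_Ico.1 ((mem_powersetCard.1 hS).1 (orderEmbOfFin_mem _ _ _))).2⟩) ?_ ?_ ?_ ?_ ?_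
  · intro m hm
    simp only [mem_powersetCard, subset_iff, mem_image, mem_univ, true_and, mem_Ico,
      forall_exists_index, forall_apply_eq_imp_iff,
      card_image_of_injective _ (val_injective_of_mem_msets hm), card_univ, Fintype.card_fin,
      and_true]
    exact fun i => ⟨(mem_msets.1 hm).2 i, (m i).isLt⟩
  · intro S hS
    refine mem_msets.2 ⟨fun i j hij => ?_, fun i => ?_⟩
    · exact (S.orderEmbOfFin _).strictMono (Fin.rev_lt_rev.2 hij)
    · exact (mem_Ico.1 ((mem_powersetCard.1 hS).1 (orderEmbOfFin_mem _ _ _))).1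
  · intro m hm
    have hunique := orderEmbOfFin_unique (s := univ.image fun i => (m i : ℕ))
      (by rw [card_image_of_injective _ (val_injective_of_mem_msets hm), card_univ,
        Fintype.card_fin])
      (f := fun i => (m i.rev : ℕ)) (fun i => mem_image_of_mem _ (mem_univ _))
      (fun i j hij => (mem_msets.1 hm).1 (Fin.rev_lt_rev.2 hij))
    funext i
    exact Fin.ext (by simpa using (congrFun hunique i.rev).symm)
  · intro S hS
    ext a
    simp only [mem_image, mem_univ, true_and]
    constructor
    · rintro ⟨i, rfl⟩
      exact orderEmbOfFin_mem _ _ _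
    · intro ha
      obtain ⟨i, rfl⟩ : a ∈ Set.range (S.orderEmbOfFin (mem_powersetCard.1 hS).2) := by
        rwa [range_orderEmbOfFin]
      exact ⟨i.rev, by simp⟩
  · intro m hm
    exact (prod_image fun i _ j _ h => val_injective_of_mem_msets hm h).symm

theorem z_two_mul_sq {ζ : ℂ} (hζ : IsPrimitiveRoot ζ n) (hn : 0 < n) :
    z n (fun _ : Fin r => 2) ζ * n ^ 2 = (1 - ζ) ^ (2 * r) * ((-1) ^ r * fejerCoeff n r) := by
  have hterm (m : ℕ) : ζ ^ ((2 - 1) * m) / ((1 - ζ ^ m) / (1 - ζ)) ^ 2 =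
      (1 - ζ) ^ 2 * (ζ ^ m / (1 - ζ ^ m) ^ 2) := by
    rw [Nat.add_one_sub_one, one_mul, div_pow, div_div_eq_mul_div]
    ring
  simp only [z, hterm, prod_mul_distrib, prod_const, card_univ, Fintype.card_fin, ← pow_mul,
    ← mul_sum, sum_msets_prod fun m => ζ ^ m / (1 - ζ ^ m) ^ 2,
    ← hζ.fejerCoeff_eq_sum_powersetCard hn]
  ring

end Msets

open Asymptotics in
theorem tendsto_choose_add_div_pow (a k : ℕ) :
    Tendsto (fun n : ℕ => ((n + a).choose k : ℝ) / n ^ k) atTop (𝓝 (1 / k.factorial)) := by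
  have hshift : (fun n : ℕ => (n + a : ℝ)) ~[atTop] fun n => (n : ℝ) := by
    refine (isEquivalent_iff_tendsto_one ?_).2 ?_
    · filter_upwards [eventually_gt_atTop 0] with n hn using by positivity
    · have := tendsto_const_nhds (x := (1 : ℝ)).add
        (tendsto_const_div_atTop_nhds_zero_nat (a : ℝ))
      rw [add_zero] at this
      refine this.congr' ?_
      filter_upwards [eventually_gt_atTop 0] with n hn
      simp only [Pi.div_apply]
      field_simp
  have hchoose : (fun n : ℕ => ((n + a).choose k : ℝ)) ~[atTop]
      fun n => (n : ℝ) ^ k / k.factorial := by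
    have := (isEquivalent_choose k).comp_tendsto (tendsto_add_atTop_nat a)
    simp only [Function.comp_def, Nat.cast_add] at this
    exact this.trans ((hshift.pow k).div IsEquivalent.refl)
  refine ((hchoose.div (IsEquivalent.refl (u := fun n : ℕ => (n : ℝ) ^ k))).symm.tendsto_nhds
    (tendsto_const_nhds.congr' ?_))
  filter_upwards [eventually_gt_atTop 0] with n hn
  simp only [Pi.div_apply]
  field_simp

theorem tendsto_fejerCoeff_div_pow (j : ℕ) :
    Tendsto (fun n : ℕ => (fejerCoeff n j : ℝ) / n ^ (2 * j + 2)) atTop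
      (𝓝 (2 / (2 * j + 2).factorial)) := by
  have := (tendsto_choose_add_div_pow (j + 1) (2 * j + 2)).add
    (tendsto_choose_add_div_pow j (2 * j + 2))
  rw [← add_div, one_add_one_eq_two] at this
  refine this.congr fun n => ?_
  simp [fejerCoeff, add_div, add_assoc]

theorem tendsto_mul_one_sub_exp_div (w : ℂ) :
    Tendsto (fun n : ℕ => n * (1 - Complex.exp (w / n))) atTop (𝓝 (-w)) := by
  have hslope : Tendsto (fun n : ℕ => dslope Complex.exp 0 (w / n)) atTop (𝓝 1) := by
    have := (continuousAt_dslope_same.2 Complex.differentiableAt_exp).tendsto.comp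
      (tendsto_const_div_atTop_nhds_zero_nat w)
    simpa [dslope_same, Function.comp_def] using this
  refine (mul_one (-w) ▸ hslope.const_mul (-w)).congr' ?_
  filter_upwards [eventually_gt_atTop 0] with n hn
  rcases eq_or_ne w 0 with rfl | hw
  · simp
  have hn : (n : ℂ) ≠ 0 := Nat.cast_ne_zero.2 hn.ne'
  rw [dslope_of_ne _ (div_ne_zero hw hn), slope_def_field, Complex.exp_zero, sub_zero]
  field_simp
  ring

theorem neg_two_pi_I_pow_mul_eq (r : ℕ) :
    (-(2 * Real.pi * Complex.I)) ^ (2 * r) *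
        ((-1) ^ r * ((2 / (2 * r + 2).factorial : ℝ) : ℂ)) =
      2 ^ (2 * r) * (Real.pi : ℂ) ^ (2 * r) / ((r + 1) * (2 * r + 1).factorial) := by
  have hr : (r : ℂ) + 1 ≠ 0 := by exact_mod_cast r.succ_ne_zero
  calc _ = (2 * Real.pi : ℂ) ^ (2 * r) * ((-1) ^ r * (-1) ^ r) *
        ((2 / (2 * r + 2).factorial : ℝ) : ℂ) := by
        rw [(even_two_mul r).neg_pow, mul_pow _ Complex.I, pow_mul Complex.I, Complex.I_sq]
        ring
    _ = _ := by
        rw [← mul_pow, neg_one_mul, neg_neg, one_pow, mul_one, Nat.factorial_succ]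
        push_cast
        rw [show 2 * (r : ℂ) + 1 + 1 = 2 * (r + 1) by ring]
        field_simp
        ring

theorem xi_twos_general (r : ℕ) :
    Filter.Tendsto
      (fun n : ℕ => z n (fun _ : Fin r => 2)
        (Complex.exp (2 * (Real.pi : ℂ) * Complex.I / (n : ℂ))))
      Filter.atTop
      (nhds ((2 ^ (2 * r) * (Real.pi : ℂ) ^ (2 * r)) /
        (((r : ℂ) + 1) * (Nat.factorial (2 * r + 1) : ℂ)))) := by
  have hlim := ((tendsto_mul_one_sub_exp_div (2 * Real.pi * Complex.I)).pow (2 * r)).mul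
    (((Complex.continuous_ofReal.tendsto _).comp (tendsto_fejerCoeff_div_pow r)).const_mul
      ((-1) ^ r))
  rw [← neg_two_pi_I_pow_mul_eq]
  refine hlim.congr' ?_
  filter_upwards [eventually_gt_atTop 0] with n hn
  have hn' : (n : ℂ) ≠ 0 := Nat.cast_ne_zero.2 hn.ne'
  rw [eq_div_iff (pow_ne_zero 2 hn') |>.2
    (z_two_mul_sq (Complex.isPrimitiveRoot_exp n hn.ne') hn), Function.comp_apply, mul_pow]
  push_cast
  field_simp
  ring

/-- `ξ({2}^r) = lim_{n→∞} z_n({2}^r; e^{2πi/n})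
  = 2^{2r} π^{2r} / ((r+1)(2r+1)!)`. -/
theorem xi_twos (r : ℕ) (hr : 1 ≤ r) :
    Filter.Tendsto
      (fun n : ℕ => z n (fun _ : Fin r => 2)
        (Complex.exp (2 * (Real.pi : ℂ) * Complex.I / (n : ℂ))))
      Filter.atTop
      (nhds ((2 ^ (2 * r) * (Real.pi : ℂ) ^ (2 * r)) /
        (((r : ℂ) + 1) * (Nat.factorial (2 * r + 1) : ℂ)))) :=
  xi_twos_general r
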